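/- Let P be the subalgebra of UT_4(F) of matrices with diagonal (a,b,c,a) and possibly nonzero entries in positions (1,2),(1,3),(1,4),(2,4),(3,4). Then P is closed under the reflection involution θ_4, the center of P is F·I + F·e_{14}, and the polynomial [x_1^+,x_2^+][x_3^+,x_4^+] is a proper central *-polynomial for (P, θ_4): every product [A,B][C,D] with A,B,C,D symmetric lies in Z(P), and some such product is nonzero. -/

import Mathlib

open Matrix

/-- The reflection involution `θ_4` on `M_4(F)`. -/
def reflInv {F : Type*} [Field F] (A : Matrix (Fin 4) (Fin 4) F) :
    Matrix (Fin 4) (Fin 4) F :=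
  Matrix.of fun i j => A j.rev i.rev

/-- Membership in the algebra `P ⊆ UT_4(F)`: upper triangular, diagonal `(a,b,c,a)`
and entry `(2,3)` (1-indexed) equal to zero. -/
def memP {F : Type*} [Field F] (M : Matrix (Fin 4) (Fin 4) F) : Prop :=
  (∀ i j : Fin 4, j < i → M i j = 0) ∧ M 0 0 = M 3 3 ∧ M 1 2 = 0

/-!
The commutator of two elements of `P` has zero diagonal, so it lies in the radical `J` of
strictly upper triangular elements of `P`. Since `e₂₃ ∉ P`, the only path `i < k < j` that
survives in a product of two elements of `J` is `1 → k → 4`, so `J² ⊆ F·e₁₄`; and `e₁₄` is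
central in `P` because the corner entries of an element of `P` agree. Hence
`[A,B][C,D] ∈ F·e₁₄ ⊆ Z(P)` for all `A, B, C, D ∈ P`. For properness take the symmetric
elements `e₁₂ + e₃₄`, `e₂₂ + e₃₃`, `e₁₃ + e₂₄`: then `[A,B][C,B] = -e₁₄`.
-/

section

variable {F : Type*} [Field F]

theorem memP_of (a b c x y z w v : F) :
    memP !![a, x, y, z; 0, b, 0, w; 0, 0, c, v; 0, 0, 0, a] := by
  refine ⟨fun i j hji => ?_, rfl, rfl⟩
  fin_cases i <;> fin_cases j <;> first | rfl | exact absurd hji (by decide)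

theorem memP.eta {M : Matrix (Fin 4) (Fin 4) F} (hM : memP M) :
    M = !![M 0 0, M 0 1, M 0 2, M 0 3; 0, M 1 1, 0, M 1 3; 0, 0, M 2 2, M 2 3;
      0, 0, 0, M 0 0] := by
  obtain ⟨hlow, hdiag, h12⟩ := hM
  ext i j
  fin_cases i <;> fin_cases j <;> simp [hlow, hdiag, h12]

theorem reflInv_of (a b c x y z w v : F) :
    reflInv !![a, x, y, z; 0, b, 0, w; 0, 0, c, v; 0, 0, 0, a] =
      !![a, v, w, z; 0, c, 0, y; 0, 0, b, x; 0, 0, 0, a] := by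
  ext i j
  fin_cases i <;> fin_cases j <;> rfl

theorem memP.reflInv {M : Matrix (Fin 4) (Fin 4) F} (hM : memP M) : memP (reflInv M) := by
  rw [hM.eta, reflInv_of]
  exact memP_of ..

theorem memP_single {i j : Fin 4} (hij : i < j) (h12 : (i, j) ≠ (1, 2)) (c : F) :
    memP (single i j c) := by
  refine ⟨fun k l hlk => ?_, ?_, ?_⟩
  · rw [single_apply, if_neg]
    rintro ⟨rfl, rfl⟩
    exact lt_asymm hij hlk
  all_goals fin_cases i <;> fin_cases j <;> simp_all

theorem memP.commute_single_zero_three {X : Matrix (Fin 4) (Fin 4) F} (hX : memP X) :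
    Commute (single 0 3 (1 : F)) X := by
  rw [hX.eta]
  ext i j
  fin_cases i <;> fin_cases j <;> simp [mul_apply, single_apply]

theorem forall_memP_mul_comm_iff (M : Matrix (Fin 4) (Fin 4) F) :
    (∀ X, memP X → M * X = X * M) ↔ ∃ a b : F, M = a • 1 + b • single 0 3 1 := by
  constructor
  · intro hM
    have h01 : Commute (single 0 1 (1 : F)) M := (hM _ (memP_single (by decide) (by decide) _)).symm
    have h02 : Commute (single 0 2 (1 : F)) M := (hM _ (memP_single (by decide) (by decide) _)).symm
    have h13 : Commute (single 1 3 (1 : F)) M := (hM _ (memP_single (by decide) (by decide) _)).symm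
    have h23 : Commute (single 2 3 (1 : F)) M := (hM _ (memP_single (by decide) (by decide) _)).symm
    refine ⟨M 0 0, M 0 3, ?_⟩
    ext i j
    fin_cases i <;> fin_cases j <;>
      simp [one_apply, row_eq_zero_of_commute_single h01,
        row_eq_zero_of_commute_single h02, col_eq_zero_of_commute_single h01,
        col_eq_zero_of_commute_single h13, col_eq_zero_of_commute_single h23,
        ← diag_eq_of_commute_single h01, ← diag_eq_of_commute_single h02,
        ← diag_eq_of_commute_single h23]
  · rintro ⟨a, b, rfl⟩ X hX
    simp only [add_mul, mul_add, smul_mul, Matrix.mul_smul, one_mul, mul_one,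
      hX.commute_single_zero_three.eq]

/-- The Jacobson radical `J(P)`: the strictly upper triangular elements of `P`. -/
def memJ (M : Matrix (Fin 4) (Fin 4) F) : Prop :=
  (∀ i j : Fin 4, j ≤ i → M i j = 0) ∧ M 1 2 = 0

theorem memJ_commutator {A B : Matrix (Fin 4) (Fin 4) F} (hA : memP A) (hB : memP B) :
    memJ (A * B - B * A) := by
  rw [hA.eta, hB.eta]
  refine ⟨fun i j hji => ?_, ?_⟩
  · fin_cases i <;> fin_cases j <;> simp at hji ⊢ <;> ring
  · simp

theorem memJ.mul_eq {X Y : Matrix (Fin 4) (Fin 4) F} (hX : memJ X) (hY : memJ Y) :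
    X * Y = (X 0 1 * Y 1 3 + X 0 2 * Y 2 3) • single 0 3 1 := by
  obtain ⟨hX, hX12⟩ := hX
  obtain ⟨hY, hY12⟩ := hY
  ext i j
  fin_cases i <;> fin_cases j <;> simp [mul_apply, Fin.sum_univ_four, hX, hY, hX12, hY12]

end

theorem stmt_11_general (F : Type*) [Field F] :
    (∀ M : Matrix (Fin 4) (Fin 4) F, memP M → memP (reflInv M)) ∧
    (∀ M : Matrix (Fin 4) (Fin 4) F, memP M →
      ((∀ X : Matrix (Fin 4) (Fin 4) F, memP X → M * X = X * M) ↔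
        ∃ a b : F, M = a • (1 : Matrix (Fin 4) (Fin 4) F) +
          b • Matrix.single 0 3 (1 : F))) ∧
    (∀ A B C D : Matrix (Fin 4) (Fin 4) F,
      memP A → memP B → memP C → memP D →
      reflInv A = A → reflInv B = B → reflInv C = C → reflInv D = D →
      ∃ a b : F, (A * B - B * A) * (C * D - D * C) =
        a • (1 : Matrix (Fin 4) (Fin 4) F) + b • Matrix.single 0 3 (1 : F)) ∧
    (∃ A B C D : Matrix (Fin 4) (Fin 4) F,
      memP A ∧ memP B ∧ memP C ∧ memP D ∧
      reflInv A = A ∧ reflInv B = B ∧ reflInv C = C ∧ reflInv D = D ∧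
      (A * B - B * A) * (C * D - D * C) ≠ 0) := by
  refine ⟨fun M hM => hM.reflInv, fun M _ => forall_memP_mul_comm_iff M, ?_, ?_⟩
  · rintro A B C D hA hB hC hD - - - -
    rw [(memJ_commutator hA hB).mul_eq (memJ_commutator hC hD)]
    exact ⟨0, _, by rw [zero_smul, zero_add]⟩
  · refine ⟨!![0, 1, 0, 0; 0, 0, 0, 0; 0, 0, 0, 1; 0, 0, 0, 0],
      !![0, 0, 0, 0; 0, 1, 0, 0; 0, 0, 1, 0; 0, 0, 0, 0],
      !![0, 0, 1, 0; 0, 0, 0, 1; 0, 0, 0, 0; 0, 0, 0, 0],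
      !![0, 0, 0, 0; 0, 1, 0, 0; 0, 0, 1, 0; 0, 0, 0, 0],
      memP_of .., memP_of .., memP_of .., memP_of ..,
      reflInv_of .., reflInv_of .., reflInv_of .., reflInv_of .., fun h => ?_⟩
    simpa [mul_apply, Fin.sum_univ_four] using congrFun (congrFun h 0) 3

/-- `P` is closed under `θ_4`, `Z(P) = F·1 + F·e_{14}`, and
`[x₁⁺,x₂⁺][x₃⁺,x₄⁺]` is a proper central `*`-polynomial for `(P, θ_4)`. -/
theorem stmt_11 (F : Type*) [Field F] [CharZero F] :
    (∀ M : Matrix (Fin 4) (Fin 4) F, memP M → memP (reflInv M)) ∧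
    (∀ M : Matrix (Fin 4) (Fin 4) F, memP M →
      ((∀ X : Matrix (Fin 4) (Fin 4) F, memP X → M * X = X * M) ↔
        ∃ a b : F, M = a • (1 : Matrix (Fin 4) (Fin 4) F) +
          b • Matrix.single 0 3 (1 : F))) ∧
    (∀ A B C D : Matrix (Fin 4) (Fin 4) F,
      memP A → memP B → memP C → memP D →
      reflInv A = A → reflInv B = B → reflInv C = C → reflInv D = D →
      ∃ a b : F, (A * B - B * A) * (C * D - D * C) =
        a • (1 : Matrix (Fin 4) (Fin 4) F) + b • Matrix.single 0 3 (1 : F)) ∧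
    (∃ A B C D : Matrix (Fin 4) (Fin 4) F,
      memP A ∧ memP B ∧ memP C ∧ memP D ∧
      reflInv A = A ∧ reflInv B = B ∧ reflInv C = C ∧ reflInv D = D ∧
      (A * B - B * A) * (C * D - D * C) ≠ 0) :=
  stmt_11_general F
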